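/- arXiv:2412.15878 — 2 statements merged into one kernel-verified Lean document; each statement's English description precedes it below -/
import Mathlib

section
/- Let m, n be positive integers with m > n. Define the social welfare of a winning-value vector w : Fin m → [0,1] as SW(w) = −max_j |p − w j|, for a fixed peak p with 1/⌈m/n⌉ < p ≤ 1. Suppose each of n players i has a budget-1 document dᵢ ∈ [0,1]^m (∑_j dᵢʲ ≤ 1), and w j = max_i dᵢʲ for every j. Then SW(w) ≤ 1/⌈m/n⌉ − p, and this bound is attained by a profile where w j = 1/⌈m/n⌉ for all j. -/
/-- Social welfare bound (large peak): for any feasible profile with winning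
values `w`, `SW(w) = −max_j |p − w j| ≤ 1/⌈m/n⌉ − p`, and the bound is attained
by a profile with `w j = 1/⌈m/n⌉` for all `j`. -/
theorem stmt_5 (m n : ℕ) (hm : 0 < m) (hn : 0 < n) (hmn : n < m)
    (p : ℝ) (hp1 : 1 / ((⌈(m : ℝ) / n⌉ : ℤ) : ℝ) < p) (hp2 : p ≤ 1) :
    (∀ d : Fin n → Fin m → ℝ,
      (∀ i j, d i j ∈ Set.Icc (0 : ℝ) 1) →
      (∀ i, ∑ j, d i j ≤ 1) →
      ∀ w : Fin m → ℝ,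
      (∀ j, IsGreatest (Set.range fun i => d i j) (w j)) →
      -(Finset.univ.sup' (Finset.univ_nonempty_iff.mpr ⟨⟨0, hm⟩⟩) fun j => |p - w j|) ≤
        1 / ((⌈(m : ℝ) / n⌉ : ℤ) : ℝ) - p) ∧
    (∃ d : Fin n → Fin m → ℝ, ∃ w : Fin m → ℝ,
      (∀ i j, d i j ∈ Set.Icc (0 : ℝ) 1) ∧
      (∀ i, ∑ j, d i j ≤ 1) ∧
      (∀ j, IsGreatest (Set.range fun i => d i j) (w j)) ∧
      (∀ j, w j = 1 / ((⌈(m : ℝ) / n⌉ : ℤ) : ℝ)) ∧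
      -(Finset.univ.sup' (Finset.univ_nonempty_iff.mpr ⟨⟨0, hm⟩⟩) fun j => |p - w j|) =
        1 / ((⌈(m : ℝ) / n⌉ : ℤ) : ℝ) - p) := by
  classical
  set K : ℤ := ⌈(m : ℝ) / n⌉ with hKdef
  have hn' : (0 : ℝ) < n := by exact_mod_cast hn
  have hmn' : (1 : ℝ) < (m : ℝ) / n := (one_lt_div hn').mpr (by exact_mod_cast hmn)
  have hK1 : (1 : ℤ) < K := Int.lt_ceil.mpr (by exact_mod_cast hmn')
  have hK0 : (0 : ℤ) ≤ K := by linarith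
  have hKR : (0 : ℝ) < (K : ℝ) := by exact_mod_cast lt_trans one_pos hK1
  set C : ℕ := K.toNat with hCdef
  have hCKZ : (C : ℤ) = K := Int.toNat_of_nonneg hK0
  have hCK : (C : ℝ) = (K : ℝ) := by exact_mod_cast hCKZ
  have hC0 : 0 < C := by
    have : (0 : ℝ) < (C : ℝ) := hCK ▸ hKR
    exact_mod_cast this
  -- m ≤ n * C
  have hmdiv : (m : ℝ) / n ≤ (K : ℝ) := Int.le_ceil _
  have hmnC : m ≤ n * C := by
    have : (m : ℝ) ≤ (n : ℝ) * C := by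
      rw [hCK]; calc (m : ℝ) = (m / n) * n := by field_simp
        _ ≤ (K : ℝ) * n := by nlinarith
        _ = (n : ℝ) * K := by ring
    exact_mod_cast this
  -- n * (C - 1) < m
  have hnCm : n * (C - 1) < m := by
    have h1 : (K : ℝ) < (m : ℝ) / n + 1 := Int.ceil_lt_add_one _
    have h2 : (n : ℝ) * ((C : ℝ) - 1) < m := by
      rw [hCK]
      have : ((K : ℝ) - 1) * n < ((m : ℝ) / n) * n := by nlinarith
      calc (n : ℝ) * ((K : ℝ) - 1) = ((K : ℝ) - 1) * n := by ring
        _ < ((m : ℝ) / n) * n := this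
        _ = m := by field_simp
    have h3 : ((C - 1 : ℕ) : ℝ) = (C : ℝ) - 1 := by
      have := hC0; push_cast [Nat.cast_sub (by omega : 1 ≤ C)]; ring
    have : ((n * (C - 1) : ℕ) : ℝ) < (m : ℝ) := by push_cast [h3]; exact_mod_cast h2
    exact_mod_cast this
  have hbound : 1 / ((K : ℤ) : ℝ) = 1 / (K : ℝ) := rfl
  constructor
  · -- upper bound
    intro d hd hsum w hw
    choose f hf using fun j => (hw j).1
    obtain ⟨i, -, hi⟩ := Finset.exists_lt_card_fiber_of_mul_lt_card_of_maps_to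
      (f := f) (s := (Finset.univ : Finset (Fin m))) (t := (Finset.univ : Finset (Fin n)))
      (fun a _ => Finset.mem_univ _) (by simpa using hnCm)
    set S : Finset (Fin m) := Finset.univ.filter (fun j => f j = i) with hSdef
    have hSC : C ≤ S.card := by omega
    have hSne : S.Nonempty := Finset.card_pos.mp (by omega)
    obtain ⟨j₀, hj₀S, hj₀min⟩ := S.exists_min_image w hSne
    have hwnn : ∀ j, 0 ≤ w j := fun j => (hf j) ▸ (hd (f j) j).1
    -- sum over S of w ≤ 1
    have hsumS : ∑ j ∈ S, w j ≤ 1 := by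
      have h1 : ∑ j ∈ S, w j = ∑ j ∈ S, d i j := by
        apply Finset.sum_congr rfl
        intro j hj
        have : f j = i := (Finset.mem_filter.mp hj).2
        rw [← hf j, this]
      rw [h1]
      calc ∑ j ∈ S, d i j ≤ ∑ j, d i j :=
            Finset.sum_le_sum_of_subset_of_nonneg (Finset.subset_univ S)
              (fun j _ _ => (hd i j).1)
        _ ≤ 1 := hsum i
    have hcard : (S.card : ℝ) * w j₀ ≤ ∑ j ∈ S, w j := by
      have := Finset.card_nsmul_le_sum S w (w j₀) (fun x hx => hj₀min x hx)
      simpa [nsmul_eq_mul] using this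
    have hwj₀ : w j₀ ≤ 1 / (K : ℝ) := by
      have hCS : (C : ℝ) * w j₀ ≤ (S.card : ℝ) * w j₀ := by
        apply mul_le_mul_of_nonneg_right _ (hwnn j₀)
        exact_mod_cast hSC
      have : (K : ℝ) * w j₀ ≤ 1 := by
        rw [← hCK]; linarith
      rw [le_div_iff₀ hKR]; linarith
    -- conclude
    have hle : p - 1 / (K : ℝ) ≤ Finset.univ.sup'
        (Finset.univ_nonempty_iff.mpr ⟨⟨0, hm⟩⟩) fun j => |p - w j| := by
      calc p - 1 / (K : ℝ) ≤ p - w j₀ := by linarith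
        _ ≤ |p - w j₀| := le_abs_self _
        _ ≤ _ := Finset.le_sup' (fun j => |p - w j|) (Finset.mem_univ j₀)
    linarith
  · -- attainment
    refine ⟨fun i j => if (j : ℕ) / C = (i : ℕ) then 1 / (K : ℝ) else 0,
      fun _ => 1 / (K : ℝ), ?_, ?_, ?_, fun _ => rfl, ?_⟩
    · intro i j
      dsimp only
      constructor
      · split_ifs <;> positivity
      · split_ifs
        · rw [div_le_one hKR]; exact_mod_cast hK1.le
        · norm_num
    · intro i
      dsimp only
      have hcard : (Finset.univ.filter (fun j : Fin m => (j : ℕ) / C = (i : ℕ))).card ≤ C := by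
        have := Finset.card_le_card_of_injOn (s := Finset.univ.filter
            (fun j : Fin m => (j : ℕ) / C = (i : ℕ))) (t := Finset.range C)
          (fun j => (j : ℕ) % C)
          (fun j _ => Finset.mem_range.mpr (Nat.mod_lt _ hC0))
          (by
            intro a ha b hb hab
            have ha' : (a : ℕ) / C = (i : ℕ) := (Finset.mem_filter.mp ha).2
            have hb' : (b : ℕ) / C = (i : ℕ) := (Finset.mem_filter.mp hb).2
            have h1 : C * ((a : ℕ) / C) + (a : ℕ) % C = (a : ℕ) := Nat.div_add_mod _ _
            have h2 : C * ((b : ℕ) / C) + (b : ℕ) % C = (b : ℕ) := Nat.div_add_mod _ _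
            rw [ha'] at h1
            rw [hb'] at h2
            simp only at hab
            exact Fin.ext (by rw [← h1, ← h2, hab]))
        simpa using this
      calc ∑ j : Fin m, (if (j : ℕ) / C = (i : ℕ) then 1 / (K : ℝ) else 0)
          = (Finset.univ.filter (fun j : Fin m => (j : ℕ) / C = (i : ℕ))).card * (1 / (K : ℝ)) := by
            rw [← Finset.sum_filter, Finset.sum_const, nsmul_eq_mul]
        _ ≤ (C : ℝ) * (1 / (K : ℝ)) := by
            apply mul_le_mul_of_nonneg_right _ (by positivity)
            exact_mod_cast hcard
        _ = 1 := by rw [hCK]; field_simp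
    · intro j
      constructor
      · have hjn : (j : ℕ) / C < n := by
          rw [Nat.div_lt_iff_lt_mul hC0]
          exact lt_of_lt_of_le j.2 (by omega)
        exact ⟨⟨(j : ℕ) / C, hjn⟩, by simp⟩
      · rintro x ⟨i, rfl⟩
        dsimp only
        split_ifs
        · exact le_refl _
        · positivity
    · rw [Finset.sup'_const]
      have : |p - 1 / (K : ℝ)| = p - 1 / (K : ℝ) := abs_of_pos (by linarith [hp1])
      rw [this]; ring
end

section
/- Let n, m be positive integers with m > n, set z = ⌊m/n⌋, and let t ≥ 1/(z+1). Given n−1 documents d₂,…,dₙ ∈ [0,1]^m each with ∑_j dᵢʲ ≤ 1, the number of queries j ∈ Fin m for which some i ∈ {2,…,n} has dᵢʲ > t is at most z·(n−1); consequently, at least m − z·(n−1) ≥ z + (m − n·z) queries j satisfy dᵢʲ ≤ t for all i ∈ {2,…,n}. -/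
/-- `n − 1` budget-1 opponents exceed a threshold `t ≥ 1/(⌊m/n⌋+1)` in at most
`⌊m/n⌋·(n−1)` queries; hence at least `m − ⌊m/n⌋·(n−1) ≥ ⌊m/n⌋ + (m − n·⌊m/n⌋)`
queries are uncontested. -/
theorem stmt_7 (n m : ℕ) (hn : 0 < n) (hm : 0 < m) (hmn : n < m)
    (t : ℝ) (ht : 1 / ((m / n : ℕ) + 1 : ℝ) ≤ t)
    (d : Fin (n - 1) → Fin m → ℝ)
    (hd01 : ∀ i j, d i j ∈ Set.Icc (0 : ℝ) 1)
    (hdsum : ∀ i, ∑ j, d i j ≤ 1) :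
    (Finset.univ.filter fun j => ∃ i, t < d i j).card ≤ (m / n) * (n - 1) ∧
    m - (m / n) * (n - 1) ≤ (Finset.univ.filter fun j => ∀ i, d i j ≤ t).card ∧
    m / n + (m - n * (m / n)) ≤ m - (m / n) * (n - 1) := by
  set z := m / n with hz
  have ht0 : (0:ℝ) < t := lt_of_lt_of_le (by positivity) ht
  have h1le : (1:ℝ) ≤ t * ((z:ℝ) + 1) := (div_le_iff₀ (by positivity)).mp ht
  -- per-opponent bound
  have hcard : ∀ i, (Finset.univ.filter fun j => t < d i j).card ≤ z := by
    intro i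
    by_contra h
    push_neg at h
    set S := Finset.univ.filter fun j => t < d i j with hS
    have hne : S.Nonempty := Finset.card_pos.mp (lt_of_le_of_lt (Nat.zero_le z) h)
    have hlt : (S.card : ℝ) * t < ∑ j ∈ S, d i j := by
      have := Finset.sum_lt_sum_of_nonempty hne (f := fun _ => t) (g := d i)
        (fun j hj => (Finset.mem_filter.mp hj).2)
      simpa [Finset.sum_const, nsmul_eq_mul] using this
    have hsum : ∑ j ∈ S, d i j ≤ 1 := by
      refine le_trans (Finset.sum_le_sum_of_subset_of_nonneg (Finset.subset_univ S) ?_) (hdsum i)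
      intro j _ _; exact (hd01 i j).1
    have hzc : ((z:ℝ) + 1) ≤ (S.card : ℝ) := by exact_mod_cast h
    have : (1:ℝ) ≤ (S.card : ℝ) * t := by
      calc (1:ℝ) ≤ t * ((z:ℝ)+1) := h1le
        _ ≤ t * (S.card : ℝ) := by nlinarith
        _ = (S.card : ℝ) * t := mul_comm _ _
    linarith
  -- first conjunct
  have hmain : (Finset.univ.filter fun j => ∃ i, t < d i j).card ≤ z * (n - 1) := by
    have hsub : (Finset.univ.filter fun j => ∃ i, t < d i j) ⊆
        Finset.univ.biUnion (fun i => Finset.univ.filter fun j => t < d i j) := by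
      intro j hj
      obtain ⟨i, hi⟩ := (Finset.mem_filter.mp hj).2
      exact Finset.mem_biUnion.mpr ⟨i, Finset.mem_univ _, Finset.mem_filter.mpr ⟨Finset.mem_univ _, hi⟩⟩
    calc (Finset.univ.filter fun j => ∃ i, t < d i j).card
        ≤ (Finset.univ.biUnion (fun i => Finset.univ.filter fun j => t < d i j)).card :=
          Finset.card_le_card hsub
      _ ≤ ∑ i : Fin (n-1), (Finset.univ.filter fun j => t < d i j).card :=
          Finset.card_biUnion_le
      _ ≤ ∑ _i : Fin (n-1), z := Finset.sum_le_sum (fun i _ => hcard i)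
      _ = (n - 1) * z := by simp [Finset.sum_const, mul_comm]
      _ = z * (n - 1) := mul_comm _ _
  refine ⟨hmain, ?_, ?_⟩
  · have hcomp : (Finset.univ.filter fun j => ∀ i, d i j ≤ t) =
        (Finset.univ.filter fun j => ∃ i, t < d i j)ᶜ := by
      ext j; simp [not_lt]
    rw [hcomp, Finset.card_compl]
    simp only [Fintype.card_fin]
    omega
  · have hzn : z * n ≤ m := Nat.div_mul_le_self m n
    have hzz : z ≤ z * n := Nat.le_mul_of_pos_right z hn
    have h1 : z * (n - 1) = z * n - z := by
      cases n with
      | zero => omega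
      | succ k => rw [Nat.succ_sub_one, Nat.mul_succ]; omega
    have h2 : n * z = z * n := mul_comm _ _
    omega
end
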